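/- If C ⊆ 𝔽_q^n is an MDS code with |C| ≥ 2 and minimum distance d_w(C) = D, then A*_{d_w}(⌊D⌋_w) · |C| = q^n; in other words, every MDS code is diameter perfect. -/

import Mathlib

set_option linter.unusedSectionVars false

open scoped Classical

noncomputable section

variable {F : Type*} [Field F] [Fintype F]

def IsWeight (w : F → ℕ) : Prop :=
  (∀ a : F, w a = 0 ↔ a = 0) ∧ (∀ a : F, w (-a) = w a) ∧
    (∀ a b : F, w (a + b) ≤ w a + w b)

def Mw (w : F → ℕ) : ℕ := Finset.univ.sup w

def mw (w : F → ℕ) : ℕ := sInf {s | ∃ a : F, a ≠ 0 ∧ w a = s}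

def rho {n : ℕ} (u : Fin n → F) : ℕ :=
  (Finset.univ.filter fun j => u j ≠ 0).sup fun j => (j : ℕ) + 1

lemma rho_le {n : ℕ} (u : Fin n → F) : rho u ≤ n :=
  Finset.sup_le fun j _ => j.isLt

def chainWeight {n : ℕ} (w : F → ℕ) (u : Fin n → F) : ℕ :=
  if h : rho u = 0 then 0
  else w (u ⟨rho u - 1,
        lt_of_lt_of_le (Nat.sub_lt (Nat.pos_of_ne_zero h) Nat.one_pos) (rho_le u)⟩)
      + (rho u - 1) * Mw w

def dChain {n : ℕ} (w : F → ℕ) (u v : Fin n → F) : ℕ := chainWeight w (u - v)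

def ballW {n : ℕ} (w : F → ℕ) (x : Fin n → F) (r : ℕ) : Finset (Fin n → F) :=
  Finset.univ.filter fun v => dChain w x v ≤ r

def diamW {n : ℕ} (w : F → ℕ) (A : Finset (Fin n → F)) : ℕ :=
  (A ×ˢ A).sup fun p => dChain w p.1 p.2

def AstarW (w : F → ℕ) (n D : ℕ) : ℕ :=
  Finset.univ.sup fun A : Finset (Fin n → F) => if diamW w A ≤ D then A.card else 0

def winv (w : F → ℕ) (S : ℕ) : Finset F :=
  Finset.univ.filter fun a => a ≠ 0 ∧ w a ≤ S

def dP {n : ℕ} (C : Finset (Fin n → F)) : ℕ :=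
  sInf {s | ∃ x ∈ C, ∃ y ∈ C, x ≠ y ∧ rho (x - y) = s}

def dW {n : ℕ} (w : F → ℕ) (C : Finset (Fin n → F)) : ℕ :=
  sInf {s | ∃ x ∈ C, ∃ y ∈ C, x ≠ y ∧ dChain w x y = s}

def floorW (w : F → ℕ) (n D : ℕ) : ℕ :=
  (Finset.univ.filter fun u : Fin n → F => chainWeight w u < D).sup (chainWeight w)

def nonArch (w : F → ℕ) : Prop := ∀ a b : F, w (a + b) ≤ max (w a) (w b)

def Sw (w : F → ℕ) : ℕ :=
  if nonArch w then Mw w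
  else sInf {s | ∃ a b : F, max (w a) (w b) < w (a - b) ∧ max (w a) (w b) = s}

def WwCond (w : F → ℕ) (S : ℕ) (K : Finset F) : Prop :=
  (∀ a ∈ K, Sw w ≤ w a ∧ w a ≤ S) ∧
  (∀ a ∈ K, ∀ b : F, w b ≤ Sw w - 1 → w (a - b) ≤ S) ∧
  (∀ a ∈ K, ∀ b ∈ K, w (a - b) ≤ S)

def WwCard (w : F → ℕ) (S : ℕ) : ℕ :=
  Finset.univ.sup fun K : Finset F => if WwCond w S K then K.card else 0

def idealOf {n : ℕ} (P : PartialOrder (Fin n)) (u : Fin n → F) : Finset (Fin n) :=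
  Finset.univ.filter fun j => ∃ i : Fin n, u i ≠ 0 ∧ P.le j i

def maxOf {n : ℕ} (P : PartialOrder (Fin n)) (u : Fin n → F) : Finset (Fin n) :=
  (idealOf P u).filter fun j => ∀ k ∈ idealOf P u, P.le j k → j = k

def posetWeight {n : ℕ} (P : PartialOrder (Fin n)) (w : F → ℕ) (u : Fin n → F) : ℕ :=
  (∑ i ∈ maxOf P u, w (u i)) + Mw w * ((idealOf P u) \ (maxOf P u)).card

def dPoset {n : ℕ} (P : PartialOrder (Fin n)) (w : F → ℕ) (u v : Fin n → F) : ℕ :=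
  posetWeight P w (u - v)

def ballP {n : ℕ} (P : PartialOrder (Fin n)) (w : F → ℕ) (x : Fin n → F) (r : ℕ) :
    Finset (Fin n → F) :=
  Finset.univ.filter fun v => dPoset P w x v ≤ r

def diamP {n : ℕ} (P : PartialOrder (Fin n)) (w : F → ℕ) (A : Finset (Fin n → F)) : ℕ :=
  (A ×ˢ A).sup fun p => dPoset P w p.1 p.2

end

/-!
Let `k = d(C) - 1` and count coordinates from `0`. Two distinct codewords differ in some
coordinate `≥ k`, so `C` injects into its last `n - k` coordinates, and the MDS count
`|C| = q^(n-k)` makes this injection a bijection.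
Hence `C` contains two words whose difference is a symbol of minimal weight `m_w` at coordinate
`k` with zeros beyond it, so `d_w(C) = m_w + k M_w` and `⌊d_w(C)⌋_w = k M_w`. Chain weight at most
`k M_w` means vanishing beyond coordinate `k`, so a set of diameter `≤ k M_w` injects into its
first `k` coordinates, and the vectors supported there attain `q^k`. Thus
`A*(⌊d_w(C)⌋_w) · |C| = q^k · q^(n-k) = q^n`.
-/

open Finset

section

variable {F : Type*} [Field F] [Fintype F] {n : ℕ}

lemma le_Mw (w : F → ℕ) (a : F) : w a ≤ Mw w :=
  Finset.le_sup (mem_univ a)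

lemma mw_le (w : F → ℕ) {a : F} (ha : a ≠ 0) : mw w ≤ w a :=
  Nat.sInf_le ⟨a, ha, rfl⟩

lemma exists_ne_zero_eq_mw (w : F → ℕ) : ∃ a : F, a ≠ 0 ∧ w a = mw w :=
  Nat.sInf_mem (s := {s | ∃ a : F, a ≠ 0 ∧ w a = s}) ⟨w 1, 1, one_ne_zero, rfl⟩

lemma IsWeight.one_le_mw {w : F → ℕ} (hw : IsWeight w) : 1 ≤ mw w := by
  obtain ⟨a, ha, hwa⟩ := exists_ne_zero_eq_mw w
  have : w a ≠ 0 := fun h => ha ((hw.1 a).1 h)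
  omega

lemma IsWeight.exists_ne_zero_eq_Mw {w : F → ℕ} (hw : IsWeight w) :
    ∃ b : F, b ≠ 0 ∧ w b = Mw w := by
  obtain ⟨b, -, hb⟩ := exists_mem_eq_sup univ univ_nonempty w
  refine ⟨b, fun h => ?_, hb.symm⟩
  have := hw.one_le_mw.trans ((mw_le w one_ne_zero).trans (le_Mw w 1))
  rw [Mw, hb, h, (hw.1 0).2 rfl] at this
  omega

section Rho

variable {u : Fin n → F}

lemma rho_le_iff {k : ℕ} : rho u ≤ k ↔ ∀ j : Fin n, k ≤ j → u j = 0 := by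
  simp only [rho, Finset.sup_le_iff, mem_filter, mem_univ, true_and]
  exact forall_congr' fun j => by rw [not_imp_comm, not_le, Nat.lt_succ_iff]

lemma rho_eq_zero_iff : rho u = 0 ↔ u = 0 := by
  rw [← Nat.le_zero, rho_le_iff]
  simp [funext_iff]

lemma succ_le_rho {j : Fin n} (h : u j ≠ 0) : (j : ℕ) + 1 ≤ rho u := by
  by_contra hlt
  exact h (rho_le_iff.1 (Nat.le_of_lt_succ (not_le.1 hlt)) j le_rfl)

lemma rho_eq_succ {j : Fin n} (hj : u j ≠ 0) (hhi : ∀ i : Fin n, (j : ℕ) < i → u i = 0) :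
    rho u = j + 1 :=
  le_antisymm (rho_le_iff.2 fun i hi => hhi i hi) (succ_le_rho hj)

lemma exists_rho_eq_succ (hu : u ≠ 0) : ∃ j : Fin n, u j ≠ 0 ∧ rho u = j + 1 := by
  have hne : (univ.filter fun j => u j ≠ 0).Nonempty := by
    obtain ⟨j, hj⟩ := Function.ne_iff.1 hu
    exact ⟨j, by simpa using hj⟩
  obtain ⟨j, hj, hsup⟩ := exists_mem_eq_sup _ hne fun j : Fin n => (j : ℕ) + 1
  exact ⟨j, (mem_filter.1 hj).2, hsup⟩

lemma rho_sub_le_iff {x y : Fin n → F} {k : ℕ} :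
    rho (x - y) ≤ k ↔ ∀ j : Fin n, k ≤ j → x j = y j := by
  simp only [rho_le_iff, Pi.sub_apply, sub_eq_zero]

lemma rho_add_single {v : Fin n → F} {j : Fin n} (hv : rho v ≤ j) {a : F} (ha : a ≠ 0) :
    rho (v + Pi.single j a) = j + 1 := by
  have hvj : ∀ i : Fin n, (j : ℕ) ≤ i → v i = 0 := rho_le_iff.1 hv
  refine rho_eq_succ (by simpa [hvj j le_rfl] using ha) fun i hi => ?_
  have hij : i ≠ j := fun h => by simp [h] at hi
  simp [hvj i hi.le, hij]

end Rho

section ChainWeight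

variable (w : F → ℕ) {u : Fin n → F}

lemma chainWeight_of_rho_eq {j : Fin n} (h : rho u = j + 1) :
    chainWeight w u = w (u j) + j * Mw w := by
  have hj : (⟨rho u - 1, by omega⟩ : Fin n) = j := Fin.ext (by simp [h])
  rw [chainWeight, dif_neg (by omega), hj, h, Nat.add_sub_cancel]

lemma chainWeight_le_rho_mul (u : Fin n → F) : chainWeight w u ≤ rho u * Mw w := by
  rcases eq_or_ne u 0 with rfl | hu
  · rw [chainWeight, dif_pos (rho_eq_zero_iff.2 rfl)]
    exact Nat.zero_le _
  obtain ⟨j, -, hj⟩ := exists_rho_eq_succ hu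
  rw [chainWeight_of_rho_eq w hj, hj, Nat.succ_mul, add_comm]
  exact Nat.add_le_add_left (le_Mw w _) _

lemma mw_add_le_chainWeight (hu : u ≠ 0) : mw w + (rho u - 1) * Mw w ≤ chainWeight w u := by
  obtain ⟨j, hj0, hj⟩ := exists_rho_eq_succ hu
  rw [chainWeight_of_rho_eq w hj, hj, Nat.add_sub_cancel]
  exact Nat.add_le_add_right (mw_le w hj0) _

lemma chainWeight_add_single {v : Fin n → F} {j : Fin n} (hv : rho v ≤ j) {a : F} (ha : a ≠ 0) :
    chainWeight w (v + Pi.single j a) = w a + j * Mw w := by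
  rw [chainWeight_of_rho_eq w (rho_add_single hv ha), Pi.add_apply, rho_le_iff.1 hv j le_rfl,
    Pi.single_eq_same, zero_add]

variable {w}

lemma rho_le_of_chainWeight_lt {k : ℕ} (h : chainWeight w u < mw w + k * Mw w) : rho u ≤ k := by
  by_contra! hk
  have hu : u ≠ 0 := fun h => by rw [← rho_eq_zero_iff] at h; omega
  have := mw_add_le_chainWeight w hu
  have : k * Mw w ≤ (rho u - 1) * Mw w := Nat.mul_le_mul_right _ (by omega)
  omega

lemma chainWeight_le_mul_Mw_iff (hw : 1 ≤ mw w) {k : ℕ} :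
    chainWeight w u ≤ k * Mw w ↔ rho u ≤ k :=
  ⟨fun h => rho_le_of_chainWeight_lt (w := w) (by omega),
    fun h => (chainWeight_le_rho_mul w u).trans (Nat.mul_le_mul_right _ h)⟩

end ChainWeight

section Coordinates

variable {k : ℕ}

def lowPart (hk : k ≤ n) (u : Fin n → F) : Fin k → F := fun i => u (Fin.castLE hk i)

def highPart (k : ℕ) (u : Fin n → F) : Fin (n - k) → F := fun i => u ⟨k + i, by omega⟩

lemma highPart_eq_iff {x y : Fin n → F} : highPart k x = highPart k y ↔ rho (x - y) ≤ k := by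
  rw [rho_sub_le_iff, funext_iff]
  refine ⟨fun h j hj => ?_, fun h i => h _ (Nat.le_add_right k i)⟩
  have := h ⟨j - k, by omega⟩
  simpa [highPart, Nat.add_sub_cancel' hj] using this

lemma eq_of_lowPart_eq {x y : Fin n → F} (hk : k ≤ n) (hlow : lowPart hk x = lowPart hk y)
    (hhigh : rho (x - y) ≤ k) : x = y := by
  funext j
  by_cases hj : (j : ℕ) < k
  · exact congrFun hlow ⟨j, hj⟩
  · exact rho_sub_le_iff.1 hhigh j (not_lt.1 hj)

lemma pow_le_card_filter_rho_le (hk : k ≤ n) :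
    Fintype.card F ^ k ≤ (univ.filter fun u : Fin n → F => rho u ≤ k).card := by
  have hsurj : Set.SurjOn (lowPart hk)
      (↑(univ.filter fun u : Fin n → F => rho u ≤ k) : Set (Fin n → F)) Set.univ := by
    intro t _
    refine ⟨fun j => if h : (j : ℕ) < k then t ⟨j, h⟩ else 0, ?_, ?_⟩
    · simpa [rho_le_iff] using fun j hj => by omega
    · funext i
      simp [lowPart]
  simpa using card_le_card_of_surjOn (t := (univ : Finset (Fin k → F))) _ (by rwa [coe_univ])

end Coordinates

section Diameter

variable {w : F → ℕ} {D : ℕ}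

lemma diamW_le_iff {A : Finset (Fin n → F)} :
    diamW w A ≤ D ↔ ∀ x ∈ A, ∀ y ∈ A, dChain w x y ≤ D := by
  simp only [diamW, Finset.sup_le_iff, mem_product, and_imp, Prod.forall]
  exact ⟨fun h x hx y hy => h x y hx hy, fun h x y hx hy => h x hx y hy⟩

lemma card_le_AstarW {A : Finset (Fin n → F)} (h : diamW w A ≤ D) : A.card ≤ AstarW w n D :=
  le_of_eq_of_le (if_pos h).symm
    (Finset.le_sup (f := fun A => if diamW w A ≤ D then A.card else 0) (mem_univ A))

lemma AstarW_le {N : ℕ} (h : ∀ A : Finset (Fin n → F), diamW w A ≤ D → A.card ≤ N) :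
    AstarW w n D ≤ N :=
  Finset.sup_le fun A _ => by split_ifs with hA; exacts [h A hA, Nat.zero_le _]

variable {k : ℕ}

lemma card_le_of_diamW_le (hw : 1 ≤ mw w) (hk : k ≤ n) {A : Finset (Fin n → F)}
    (hA : diamW w A ≤ k * Mw w) : A.card ≤ Fintype.card F ^ k := by
  have hinj : Set.InjOn (lowPart hk) A := fun x hx y hy hxy =>
    eq_of_lowPart_eq hk hxy ((chainWeight_le_mul_Mw_iff hw).1 (diamW_le_iff.1 hA x hx y hy))
  simpa using card_le_card_of_injOn (t := univ) _ (fun _ _ => mem_univ _) hinj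

lemma diamW_filter_rho_le (w : F → ℕ) :
    diamW w (univ.filter fun u : Fin n → F => rho u ≤ k) ≤ k * Mw w := by
  refine diamW_le_iff.2 fun x hx y hy => ?_
  have hxy : rho (x - y) ≤ k := rho_sub_le_iff.2 fun j hj =>
    (rho_le_iff.1 (mem_filter.1 hx).2 j hj).trans (rho_le_iff.1 (mem_filter.1 hy).2 j hj).symm
  exact (chainWeight_le_rho_mul w _).trans (Nat.mul_le_mul_right _ hxy)

lemma AstarW_mul_Mw (hw : 1 ≤ mw w) (hk : k ≤ n) :
    AstarW w n (k * Mw w) = Fintype.card F ^ k :=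
  le_antisymm (AstarW_le fun _ => card_le_of_diamW_le hw hk)
    ((pow_le_card_filter_rho_le hk).trans (card_le_AstarW (diamW_filter_rho_le w)))

end Diameter

section Floor

variable {w : F → ℕ} {k : ℕ}

lemma floorW_mw_add_mul (hw : IsWeight w) (hk : k ≤ n) :
    floorW w n (mw w + k * Mw w) = k * Mw w := by
  refine le_antisymm (Finset.sup_le fun u hu => ?_) ?_
  · exact (chainWeight_le_mul_Mw_iff hw.one_le_mw).2
      (rho_le_of_chainWeight_lt (mem_filter.1 hu).2)
  rcases Nat.eq_zero_or_pos k with rfl | hk0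
  · simp
  obtain ⟨b, hb, hbM⟩ := hw.exists_ne_zero_eq_Mw
  let j : Fin n := ⟨k - 1, by omega⟩
  have hcw : chainWeight w (Pi.single j b) = k * Mw w := by
    have := chainWeight_add_single w (v := 0) (j := j)
      ((rho_eq_zero_iff.2 rfl).trans_le (Nat.zero_le _)) hb
    rw [zero_add] at this
    rw [this, hbM, add_comm, ← Nat.succ_mul]
    exact congrArg (· * Mw w) (Nat.sub_add_cancel hk0)
  have hlt : chainWeight w (Pi.single j b) < mw w + k * Mw w := by
    have := hw.one_le_mw
    omega
  exact hcw.symm.le.trans (Finset.le_sup (mem_filter.2 ⟨mem_univ _, hlt⟩))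

end Floor

section Code

variable {C : Finset (Fin n → F)}

lemma dP_le_rho_sub {x y : Fin n → F} (hx : x ∈ C) (hy : y ∈ C) (hxy : x ≠ y) :
    dP C ≤ rho (x - y) :=
  Nat.sInf_le ⟨x, hx, y, hy, hxy, rfl⟩

lemma one_le_dP (hC : 1 < C.card) : 1 ≤ dP C := by
  obtain ⟨x, hx, y, hy, hxy⟩ := one_lt_card.1 hC
  refine le_csInf ⟨_, x, hx, y, hy, hxy, rfl⟩ ?_
  rintro _ ⟨x, -, y, -, hxy, rfl⟩
  exact Nat.one_le_iff_ne_zero.2 (mt rho_eq_zero_iff.1 (sub_ne_zero.2 hxy))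

variable {k : ℕ}

lemma exists_highPart_eq_of_card (hsep : ∀ x ∈ C, ∀ y ∈ C, x ≠ y → k < rho (x - y))
    (hcard : C.card = Fintype.card F ^ (n - k)) (t : Fin (n - k) → F) :
    ∃ x ∈ C, highPart k x = t := by
  have hinj : Set.InjOn (highPart k) (C : Set (Fin n → F)) := fun x hx y hy hxy => by
    by_contra hne
    exact (hsep x hx y hy hne).not_ge (highPart_eq_iff.1 hxy)
  have := surjOn_of_injOn_of_card_le (t := univ) _ (fun _ _ => mem_univ _) hinj (by simp [hcard])
  simpa using this (mem_univ t)

lemma dW_eq (w : F → ℕ) (hk : k < n) (hsep : ∀ x ∈ C, ∀ y ∈ C, x ≠ y → k < rho (x - y))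
    (hsurj : ∀ t, ∃ x ∈ C, highPart k x = t) :
    dW w C = mw w + k * Mw w := by
  obtain ⟨x₀, hx₀, -⟩ := hsurj 0
  obtain ⟨a, ha, hwa⟩ := exists_ne_zero_eq_mw w
  set s : Fin n → F := Pi.single ⟨k, hk⟩ a
  obtain ⟨x, hx, hxs⟩ := hsurj (highPart k (x₀ + s))
  have hdiff : x - x₀ = (x - (x₀ + s)) + s := by abel
  have hlow : rho (x - (x₀ + s)) ≤ k := highPart_eq_iff.1 hxs
  have hne : x ≠ x₀ := fun h => by
    have := rho_add_single (j := ⟨k, hk⟩) hlow ha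
    rw [← hdiff, h, sub_self, rho_eq_zero_iff.2 rfl] at this
    omega
  refine le_antisymm (Nat.sInf_le ⟨x, hx, x₀, hx₀, hne, ?_⟩) ?_
  · rw [dChain, hdiff, chainWeight_add_single w hlow ha, hwa]
  refine le_csInf ⟨_, x, hx, x₀, hx₀, hne, rfl⟩ ?_
  rintro _ ⟨y, hy, z, hz, hyz, rfl⟩
  have hyz' := hsep y hy z hz hyz
  have : k * Mw w ≤ (rho (y - z) - 1) * Mw w := Nat.mul_le_mul_right _ (by omega)
  exact (Nat.add_le_add_left this _).trans (mw_add_le_chainWeight w (sub_ne_zero.2 hyz))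

end Code

end

theorem stmt11_general {F : Type*} [Field F] [Fintype F] {n : ℕ}
    (w : F → ℕ) (hw : IsWeight w) (C : Finset (Fin n → F)) (hC : 2 ≤ C.card)
    (hMDS : C.card = Fintype.card F ^ (n - dP C + 1)) :
    AstarW w n (floorW w n (dW w C)) * C.card = Fintype.card F ^ n := by
  obtain ⟨x, hx, y, hy, hxy⟩ := one_lt_card.1 hC
  have hd1 : 1 ≤ dP C := one_le_dP hC
  have hdn : dP C ≤ n := (dP_le_rho_sub hx hy hxy).trans (rho_le _)
  have hsep : ∀ x ∈ C, ∀ y ∈ C, x ≠ y → dP C - 1 < rho (x - y) := fun x hx y hy hxy =>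
    Nat.sub_one_lt_of_le hd1 (dP_le_rho_sub hx hy hxy)
  have hcard : C.card = Fintype.card F ^ (n - (dP C - 1)) := by
    rw [hMDS]
    congr 1
    omega
  rw [dW_eq w (by omega) hsep (exists_highPart_eq_of_card hsep hcard),
    floorW_mw_add_mul hw (by omega), AstarW_mul_Mw hw.one_le_mw (by omega), hcard, ← pow_add,
    Nat.add_sub_cancel' (by omega)]

theorem stmt11 {F : Type*} [Field F] [Fintype F] {n : ℕ} (hn : 1 ≤ n)
    (w : F → ℕ) (hw : IsWeight w) (C : Finset (Fin n → F)) (hC : 2 ≤ C.card)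
    (hMDS : C.card = Fintype.card F ^ (n - dP C + 1)) :
    AstarW w n (floorW w n (dW w C)) * C.card = Fintype.card F ^ n :=
  stmt11_general w hw C hC hMDS
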